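/- Let G be a t.d.l.c. group and K a compact subgroup of G. Then K is equal to the intersection of all compact open subgroups U of G with K ≤ U. -/

import Mathlib

open Set Filter MulAction
open scoped Pointwise Topology

/-!
If `g ∉ K`, total disconnectedness gives a compact open neighbourhood `V` of `1` with
`g ∉ K * V`. The compact open set `K * V` is stable under left multiplication by `K`, and the
stabilizer of a compact open set containing `1` is a compact open subgroup contained in it; so this
stabilizer contains `K` but not `g`.
-/

theorem exists_isCompact_isOpen_mem_subset {X : Type*} [TopologicalSpace X]
    [LocallyCompactSpace X] [T2Space X] [TotallyDisconnectedSpace X]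
    {x : X} {U : Set X} (hU : U ∈ 𝓝 x) :
    ∃ V, IsCompact V ∧ IsOpen V ∧ x ∈ V ∧ V ⊆ U := by
  obtain ⟨s, ⟨hs, hsc⟩, hsU⟩ := (compact_basis_nhds x).mem_iff.mp hU
  obtain ⟨V, hV, hxV, hVs⟩ :=
    loc_compact_Haus_tot_disc_of_zero_dim.mem_nhds_iff.mp (interior_mem_nhds.mpr hs)
  have hVs : V ⊆ s := hVs.trans interior_subset
  exact ⟨V, hsc.of_isClosed_subset hV.isClosed hVs, hV.isOpen, hxV, hVs.trans hsU⟩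

section

variable {G : Type*} [Group G]

theorem MulAction.stabilizer_subset_of_one_mem {W : Set G} (hW : (1 : G) ∈ W) :
    (stabilizer G W : Set G) ⊆ W := fun g hg => by
  simpa using (mem_stabilizer_set.mp hg 1).mpr hW

variable [TopologicalSpace G] [IsTopologicalGroup G]

-- By compactness some `V ∈ 𝓝 1` has `V * W ⊆ W`; then `g • W = W` for all `g ∈ V ∩ V⁻¹`.
theorem MulAction.isOpen_stabilizer_of_isCompact_of_isOpen {W : Set G} (hWc : IsCompact W)
    (hWo : IsOpen W) : IsOpen (stabilizer G W : Set G) := by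
  obtain ⟨V, hV, hVW⟩ := compact_open_separated_mul_left hWc hWo subset_rfl
  refine Subgroup.isOpen_of_mem_nhds _
    (mem_of_superset (inter_mem hV (inv_mem_nhds_one G hV)) ?_)
  rintro g ⟨hg, hg'⟩
  refine mem_stabilizer_iff.mpr (subset_antisymm ?_ fun w hw => ?_)
  · exact (smul_set_subset_mul hg).trans hVW
  · exact ⟨g⁻¹ * w, hVW (mul_mem_mul hg' hw), by simp⟩

theorem exists_isCompact_isOpen_subgroup_ge_subset_mul {K : Subgroup G}
    (hK : IsCompact (K : Set G)) {V : Set G} (hVc : IsCompact V) (hVo : IsOpen V)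
    (hV1 : (1 : G) ∈ V) :
    ∃ U : Subgroup G, IsCompact (U : Set G) ∧ IsOpen (U : Set G) ∧ K ≤ U ∧
      (U : Set G) ⊆ K * V := by
  have hKV : (1 : G) ∈ (K : Set G) * V := ⟨1, K.one_mem, 1, hV1, one_mul 1⟩
  have hKVc : IsCompact ((K : Set G) * V) := hK.mul hVc
  have hUo := isOpen_stabilizer_of_isCompact_of_isOpen hKVc hVo.mul_left
  have hUKV := stabilizer_subset_of_one_mem hKV
  refine ⟨stabilizer G ((K : Set G) * V), ?_, hUo, fun k hk => ?_, hUKV⟩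
  · exact hKVc.of_isClosed_subset (Subgroup.isClosed_of_isOpen _ hUo) hUKV
  · rw [mem_stabilizer_iff, ← smul_mul_assoc, smul_coe_set hk]

end

/-- Let `G` be a t.d.l.c. group and `K` a compact subgroup of `G`. Then `K` is the
intersection of all compact open subgroups `U` of `G` with `K ≤ U`. -/
theorem compact_subgroup_eq_sInf_compact_open_subgroups
    {G : Type*} [Group G] [TopologicalSpace G] [IsTopologicalGroup G]
    [T2Space G] [TotallyDisconnectedSpace G] [LocallyCompactSpace G]
    (K : Subgroup G) (hK : IsCompact (K : Set G)) :
    K = sInf {U : Subgroup G | IsCompact (U : Set G) ∧ IsOpen (U : Set G) ∧ K ≤ U} := by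
  refine le_antisymm (le_sInf fun U hU => hU.2.2) fun g hg => ?_
  by_contra hgK
  have hO : {v : G | g * v⁻¹ ∉ K} ∈ 𝓝 1 :=
    (hK.isClosed.isOpen_compl.preimage (by fun_prop)).mem_nhds (by simpa using hgK)
  obtain ⟨V, hVc, hVo, hV1, hVO⟩ := exists_isCompact_isOpen_mem_subset hO
  obtain ⟨U, hUc, hUo, hKU, hUKV⟩ :=
    exists_isCompact_isOpen_subgroup_ge_subset_mul hK hVc hVo hV1
  obtain ⟨k, hk, v, hv, rfl⟩ := hUKV (Subgroup.mem_sInf.mp hg U ⟨hUc, hUo, hKU⟩)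
  exact hVO hv (by simpa using hk)
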